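/- arXiv:1709.04110 — 2 statements merged into one kernel-verified Lean document; each statement's English description precedes it below -/
import Mathlib

section
/- Let C ≥ 1, 0 < c₁ ≤ 1/8, a ∈ (0,1) with a ≥ 1 − 10^{−11}·c₁², and set α = (5/3)^{3/2}·2^{−43/4}. If r ≥ max((1/18)·(1−a)^{−2/3}, 15·C^{1/2}), then the sum over all s of the form s = r + j with j a positive integer of (148·C + (9/4)·s)·exp(−c₁·(1−a)^{1/2}·α·s³) is at most exp(−10^{−2}·c₁·α·r^{9/4}). -/
set_option maxHeartbeats 2000000 in
theorem stmt3 (C c₁ a r : ℝ) (hC : 1 ≤ C) (hc₁ : 0 < c₁) (hc₁' : c₁ ≤ 1/8)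
    (ha : 0 < a) (ha1 : a < 1) (haa : 1 - (10:ℝ) ^ (-(11:ℝ)) * c₁ ^ 2 ≤ a)
    (hr : max ((1/18) * (1 - a) ^ (-(2:ℝ)/3)) (15 * C ^ ((1:ℝ)/2)) ≤ r) :
    ∑' j : ℕ, (148 * C + (9/4) * (r + ((j:ℝ) + 1))) *
        Real.exp (-(c₁ * (1 - a) ^ ((1:ℝ)/2) * ((5/3) ^ ((3:ℝ)/2) * (2:ℝ) ^ (-(43:ℝ)/4)) *
          (r + ((j:ℝ) + 1)) ^ 3))
      ≤ Real.exp (-((10:ℝ) ^ (-(2:ℝ)) * c₁ * ((5/3) ^ ((3:ℝ)/2) * (2:ℝ) ^ (-(43:ℝ)/4)) *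
          r ^ ((9:ℝ)/4))) := by
  have hrt : (1/18) * (1 - a) ^ (-(2:ℝ)/3) ≤ r := le_trans (le_max_left _ _) hr
  have hrC : 15 * C ^ ((1:ℝ)/2) ≤ r := le_trans (le_max_right _ _) hr
  have hCs : C ^ ((1:ℝ)/2) = Real.sqrt C := (Real.sqrt_eq_rpow C).symm
  have hC0 : (0:ℝ) ≤ C := le_trans zero_le_one hC
  have hsC1 : 1 ≤ Real.sqrt C := by
    have := Real.sqrt_le_sqrt hC
    simpa using this
  have hr15 : (15:ℝ) ≤ r := by
    rw [hCs] at hrC; linarith only [hrC, hsC1]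
  have hrpos : (0:ℝ) < r := by linarith
  have hC2 : 225 * C ≤ r ^ 2 := by
    rw [hCs] at hrC
    have hm : (15 * Real.sqrt C) * (15 * Real.sqrt C) ≤ r * r :=
      mul_self_le_mul_self (by positivity) hrC
    linarith only [hm, Real.sq_sqrt hC0]
  have h100 : (10:ℝ) ^ (-(2:ℝ)) = 1/100 := by
    rw [Real.rpow_neg (by norm_num), show ((2:ℝ)) = ((2:ℕ):ℝ) by norm_num,
      Real.rpow_natCast]
    norm_num
  have h1011 : (10:ℝ) ^ (-(11:ℝ)) = (10 ^ (11:ℕ) : ℝ)⁻¹ := by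
    rw [Real.rpow_neg (by norm_num), show ((11:ℝ)) = ((11:ℕ):ℝ) by norm_num,
      Real.rpow_natCast]
  rw [h100, ← Real.sqrt_eq_rpow]
  set t : ℝ := 1 - a with ht_def
  have ht0 : 0 < t := by simp only [ht_def]; linarith
  have ht2 : t ≤ c₁ ^ 2 / 100000000000 := by
    rw [h1011, show ((10:ℝ) ^ (11:ℕ)) = 100000000000 by norm_num] at haa
    simp only [ht_def]
    rw [div_eq_mul_inv]
    linarith only [haa]
  set st : ℝ := Real.sqrt t with hst_def
  have hst_pos : 0 < st := Real.sqrt_pos.mpr ht0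
  have hst_sq : st ^ 2 = t := Real.sq_sqrt ht0.le
  -- bounds on the constant A
  set A : ℝ := (5/3) ^ ((3:ℝ)/2) * (2:ℝ) ^ (-(43:ℝ)/4) with hA_def
  have hA_pos : 0 < A := by
    apply mul_pos (Real.rpow_pos_of_pos (by norm_num) _) (Real.rpow_pos_of_pos (by norm_num) _)
  have hα1 : (1:ℝ)/2048 ≤ A := by
    have h1 : (1:ℝ) ≤ (5/3:ℝ) ^ ((3:ℝ)/2) := Real.one_le_rpow (by norm_num) (by norm_num)
    have h2 : (1:ℝ)/2048 ≤ (2:ℝ) ^ (-(43:ℝ)/4) := by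
      have hmono : (2:ℝ) ^ (-(11:ℝ)) ≤ (2:ℝ) ^ (-(43:ℝ)/4) :=
        Real.rpow_le_rpow_of_exponent_le (by norm_num) (by norm_num)
      have h0 : (2:ℝ) ^ (-(11:ℝ)) = 1/2048 := by
        rw [Real.rpow_neg (by norm_num), show ((11:ℝ)) = ((11:ℕ):ℝ) by norm_num,
          Real.rpow_natCast]
        norm_num
      linarith
    calc (1:ℝ)/2048 ≤ (2:ℝ) ^ (-(43:ℝ)/4) := h2
      _ ≤ A := by
          rw [hA_def]
          exact le_mul_of_one_le_left (by positivity) h1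
  set β : ℝ := c₁ * st * A with hβ_def
  have hβ_pos : 0 < β := by
    rw [hβ_def]; exact mul_pos (mul_pos hc₁ hst_pos) hA_pos
  clear_value t st A β
  -- c₁ is big compared to st
  have hstc : 300000 * st ≤ c₁ := by
    have h9 : (300000 * st) ^ 2 ≤ c₁ ^ 2 := by
      rw [mul_pow, hst_sq]; linarith only [ht2, sq_nonneg c₁]
    exact (pow_le_pow_iff_left₀ (by positivity) hc₁.le (by norm_num)).mp h9
  -- lower bound on st in terms of r
  have h18a : (18:ℝ) ^ ((3:ℝ)/4) ≤ 100/11 := by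
    have h4 : ((18:ℝ) ^ ((3:ℝ)/4)) ^ (4:ℕ) = 5832 := by
      rw [← Real.rpow_natCast ((18:ℝ) ^ ((3:ℝ)/4)) 4,
        ← Real.rpow_mul (by norm_num : (0:ℝ) ≤ 18),
        show ((3:ℝ)/4 * ((4:ℕ):ℝ)) = ((3:ℕ):ℝ) by norm_num, Real.rpow_natCast]
      norm_num
    exact (pow_le_pow_iff_left₀ (Real.rpow_nonneg (by norm_num : (0:ℝ) ≤ 18) _)
      (by norm_num : (0:ℝ) ≤ 100/11) (by norm_num : (4:ℕ) ≠ 0)).mp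
      (by rw [h4]; norm_num)
  have h18b : (18:ℝ) ^ ((9:ℝ)/4) ≤ 681 := by
    have h4 : ((18:ℝ) ^ ((9:ℝ)/4)) ^ (4:ℕ) = 198359290368 := by
      rw [← Real.rpow_natCast ((18:ℝ) ^ ((9:ℝ)/4)) 4,
        ← Real.rpow_mul (by norm_num : (0:ℝ) ≤ 18),
        show ((9:ℝ)/4 * ((4:ℕ):ℝ)) = ((9:ℕ):ℝ) by norm_num, Real.rpow_natCast]
      norm_num
    exact (pow_le_pow_iff_left₀ (Real.rpow_nonneg (by norm_num : (0:ℝ) ≤ 18) _)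
      (by norm_num : (0:ℝ) ≤ (681:ℝ)) (by norm_num : (4:ℕ) ≠ 0)).mp
      (by rw [h4]; norm_num)
  have ht23_pos : 0 < t ^ ((2:ℝ)/3) := Real.rpow_pos_of_pos ht0 _
  have h23 : (1:ℝ)/(18*r) ≤ t ^ ((2:ℝ)/3) := by
    have hneg : t ^ (-(2:ℝ)/3) = (t ^ ((2:ℝ)/3))⁻¹ := by
      rw [show (-(2:ℝ)/3) = -((2:ℝ)/3) by ring, Real.rpow_neg ht0.le]
    rw [hneg] at hrt
    rw [div_le_iff₀ (by positivity)]
    have h := mul_le_mul_of_nonneg_right hrt ht23_pos.le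
    have heq : 1/18 * (t ^ ((2:ℝ)/3))⁻¹ * t ^ ((2:ℝ)/3) = 1/18 := by
      rw [mul_assoc, inv_mul_cancel₀ (ne_of_gt ht23_pos), mul_one]
    rw [heq] at h
    linarith only [h]
  have hst_lb : (11/100) * r ^ (-(3:ℝ)/4) ≤ st := by
    have h34 : ((1:ℝ)/(18*r)) ^ ((3:ℝ)/4) ≤ (t ^ ((2:ℝ)/3)) ^ ((3:ℝ)/4) :=
      Real.rpow_le_rpow (by positivity) h23 (by norm_num)
    have hA34 : (t ^ ((2:ℝ)/3)) ^ ((3:ℝ)/4) = st := by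
      rw [← Real.rpow_mul ht0.le, show ((2:ℝ)/3 * (3/4)) = 1/2 by norm_num,
        ← Real.sqrt_eq_rpow, ← hst_def]
    rw [hA34] at h34
    refine le_trans ?_ h34
    have hsplit : ((1:ℝ)/(18*r)) ^ ((3:ℝ)/4) = ((18:ℝ) ^ ((3:ℝ)/4))⁻¹ * (r ^ ((3:ℝ)/4))⁻¹ := by
      rw [one_div, Real.inv_rpow (by positivity), Real.mul_rpow (by norm_num) hrpos.le,
        mul_inv]
    rw [hsplit]
    have hrneg : r ^ (-(3:ℝ)/4) = (r ^ ((3:ℝ)/4))⁻¹ := by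
      rw [show (-(3:ℝ)/4) = -((3:ℝ)/4) by ring, Real.rpow_neg hrpos.le]
    rw [hrneg]
    have hrp : 0 < (r ^ ((3:ℝ)/4))⁻¹ := by positivity
    have hinv : (11:ℝ)/100 ≤ ((18:ℝ) ^ ((3:ℝ)/4))⁻¹ := by
      have := inv_anti₀ (Real.rpow_pos_of_pos (by norm_num : (0:ℝ) < 18) ((3:ℝ)/4)) h18a
      calc (11:ℝ)/100 = ((100:ℝ)/11)⁻¹ := by norm_num
        _ ≤ ((18:ℝ) ^ ((3:ℝ)/4))⁻¹ := this
    exact mul_le_mul_of_nonneg_right hinv hrp.le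
  -- st * r^3 vs r^(9/4)
  have hA_r : (11/100) * r ^ ((9:ℝ)/4) ≤ st * r ^ 3 := by
    have h := mul_le_mul_of_nonneg_right hst_lb (by positivity : (0:ℝ) ≤ r ^ 3)
    refine le_trans (le_of_eq ?_) h
    rw [← Real.rpow_natCast r 3, mul_assoc, ← Real.rpow_add hrpos]
    norm_num
  -- lower bound on r^(9/4) in terms of st
  have hR_lb : (1/681) * (st ^ 3)⁻¹ ≤ r ^ ((9:ℝ)/4) := by
    have hpos : (0:ℝ) < 1/18 * t ^ (-(2:ℝ)/3) :=
      mul_pos (by norm_num) (Real.rpow_pos_of_pos ht0 _)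
    have h94 : ((1/18) * t ^ (-(2:ℝ)/3)) ^ ((9:ℝ)/4) ≤ r ^ ((9:ℝ)/4) :=
      Real.rpow_le_rpow hpos.le hrt (by norm_num)
    refine le_trans ?_ h94
    have hsplit : ((1/18) * t ^ (-(2:ℝ)/3)) ^ ((9:ℝ)/4)
        = ((18:ℝ) ^ ((9:ℝ)/4))⁻¹ * (st ^ 3)⁻¹ := by
      rw [Real.mul_rpow (by norm_num) (Real.rpow_pos_of_pos ht0 _).le,
        ← Real.rpow_mul ht0.le,
        show (-(2:ℝ)/3 * ((9:ℝ)/4)) = -((1/2) * ((3:ℕ):ℝ)) by norm_num,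
        Real.rpow_neg ht0.le, Real.rpow_mul ht0.le, ← Real.sqrt_eq_rpow,
        ← hst_def, Real.rpow_natCast, one_div, Real.inv_rpow (by norm_num)]
    rw [hsplit]
    have hp : (0:ℝ) ≤ (st ^ 3)⁻¹ := by positivity
    have hinv : (1:ℝ)/681 ≤ ((18:ℝ) ^ ((9:ℝ)/4))⁻¹ := by
      have := inv_anti₀ (Real.rpow_pos_of_pos (by norm_num : (0:ℝ) < 18) ((9:ℝ)/4)) h18b
      calc (1:ℝ)/681 = ((681:ℝ))⁻¹ := by norm_num
        _ ≤ ((18:ℝ) ^ ((9:ℝ)/4))⁻¹ := this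
    exact mul_le_mul_of_nonneg_right hinv hp
  -- 2/st ≤ (1/10) c₁ A r^(9/4)
  have h2t : 2 * t ≤ c₁ * A / 6810 := by
    have e1 : c₁ * c₁ ≤ c₁ * (1/8) := mul_le_mul_of_nonneg_left hc₁' hc₁.le
    have e2 : c₁ * (1/2048) ≤ c₁ * A := mul_le_mul_of_nonneg_left hα1 hc₁.le
    linarith only [ht2, e1, e2, hc₁.le]
  have hfin1 : 2 / st ≤ (1/10) * (c₁ * A) * r ^ ((9:ℝ)/4) := by
    have step : 2 / st ≤ (1/10) * (c₁ * A) * ((1/681) * (st ^ 3)⁻¹) := by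
      have expand : (1/10) * (c₁ * A) * ((1/681) * (st ^ 3)⁻¹) = (c₁ * A / 6810) / st ^ 3 := by
        ring
      rw [expand, div_le_div_iff₀ hst_pos (by positivity)]
      have hcube : st ^ 3 = t * st := by rw [← hst_sq]; ring
      rw [hcube]
      linarith only [mul_le_mul_of_nonneg_right h2t hst_pos.le]
    refine le_trans step ?_
    have := mul_le_mul_of_nonneg_left hR_lb
      (by positivity : (0:ℝ) ≤ (1/10) * (c₁ * A))
    linarith
  -- main log bound
  have h3βpos : (0:ℝ) < 1/(3*β) := by
    apply div_pos one_pos; linarith [hβ_pos]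
  have hlog : Real.log (1/(3*β)) ≤ β * r ^ 3 - 1/100 * c₁ * A * r ^ ((9:ℝ)/4) := by
    have hst_le : st ≤ 3 * (c₁ * A) := by
      have e2 : c₁ * (1/2048) ≤ c₁ * A := mul_le_mul_of_nonneg_left hα1 hc₁.le
      linarith only [hstc, e2, hc₁.le]
    have ht3β : t ≤ 3 * β := by
      rw [hβ_def]
      linarith only [mul_le_mul_of_nonneg_left hst_le hst_pos.le, hst_sq]
    have l1 : Real.log (1/(3*β)) ≤ Real.log (1/t) :=
      Real.log_le_log h3βpos (one_div_le_one_div_of_le ht0 ht3β)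
    have l2 : Real.log (1/t) ≤ 2 / st := by
      have hEq : (1:ℝ)/t = (1/st) ^ 2 := by
        rw [div_pow, one_pow, hst_sq]
      rw [hEq, Real.log_pow]
      have := Real.log_le_sub_one_of_pos (show (0:ℝ) < 1/st from one_div_pos.mpr hst_pos)
      push_cast
      have h1st : (0:ℝ) < 1/st := one_div_pos.mpr hst_pos
      rw [one_div] at this ⊢
      have hds : (2:ℝ)/st = 2 * st⁻¹ := by rw [div_eq_mul_inv]
      rw [hds]
      linarith only [this]
    have l3 : (11/100) * (c₁ * A) * r ^ ((9:ℝ)/4) ≤ β * r ^ 3 := by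
      have h := mul_le_mul_of_nonneg_left hA_r (mul_nonneg hc₁.le hA_pos.le)
      rw [hβ_def]
      linarith only [h]
    linarith only [l1, l2, hfin1, l3]
  -- final head bound
  have hb0_le : 1/(3*β) * Real.exp (-(β * r ^ 3))
      ≤ Real.exp (-(1/100 * c₁ * A * r ^ ((9:ℝ)/4))) := by
    have h := (Real.log_le_iff_le_exp h3βpos).mp hlog
    calc 1/(3*β) * Real.exp (-(β * r ^ 3))
        ≤ Real.exp (β * r ^ 3 - 1/100 * c₁ * A * r ^ ((9:ℝ)/4)) * Real.exp (-(β * r ^ 3)) :=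
          mul_le_mul_of_nonneg_right h (Real.exp_nonneg _)
      _ = Real.exp (-(1/100 * c₁ * A * r ^ ((9:ℝ)/4))) := by
          rw [← Real.exp_add]; ring_nf
  -- the series
  set b : ℕ → ℝ := fun j => 1/(3*β) * Real.exp (-(β * (r + (j:ℝ)) ^ 3)) with hb_def
  clear_value b
  have hb_nonneg : ∀ n, 0 ≤ b n := by
    intro n; simp only [hb_def]
    exact mul_nonneg h3βpos.le (Real.exp_nonneg _)
  have hkey : ∀ j : ℕ, (148 * C + 9/4 * (r + ((j:ℝ) + 1))) *
      Real.exp (-(β * (r + ((j:ℝ) + 1)) ^ 3)) ≤ b j - b (j+1) := by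
    intro j
    set s : ℝ := r + ((j:ℝ) + 1) with hs_def
    clear_value s
    have hjn : (0:ℝ) ≤ (j:ℝ) := Nat.cast_nonneg j
    have hs16 : (16:ℝ) ≤ s := by rw [hs_def]; linarith only [hr15, hjn]
    have h1 : 148 * C + 9/4 * s ≤ (s - 1) ^ 2 := by
      rw [hs_def]
      have h15r : 15 * r ≤ r * r := mul_le_mul_of_nonneg_right hr15 hrpos.le
      have h15j : 15 * (j:ℝ) ≤ r * (j:ℝ) := mul_le_mul_of_nonneg_right hr15 hjn
      linarith only [hC2, hr15, hjn, sq_nonneg (j:ℝ), h15r, h15j]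
    have hbj : b j = 1/(3*β) * Real.exp (-(β * (s - 1) ^ 3)) := by
      simp only [hb_def]
      have : r + (j:ℝ) = s - 1 := by rw [hs_def]; ring
      rw [this]
    have hbj1 : b (j+1) = 1/(3*β) * Real.exp (-(β * s ^ 3)) := by
      simp only [hb_def]
      have : r + ((j+1 : ℕ):ℝ) = s := by rw [hs_def]; push_cast; ring
      rw [this]
    rw [hbj, hbj1]
    set X : ℝ := β * (s ^ 3 - (s - 1) ^ 3) with hX_def
    clear_value X
    have h2 : 3 * β * (s - 1) ^ 2 ≤ X := by
      rw [hX_def]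
      linarith only [mul_nonneg hβ_pos.le (show (0:ℝ) ≤ 3*s - 2 by linarith only [hs16])]
    have h3 : X ≤ Real.exp X - 1 := by linarith only [Real.add_one_le_exp X]
    have hE : Real.exp (-(β * (s - 1) ^ 3)) = Real.exp X * Real.exp (-(β * s ^ 3)) := by
      rw [← Real.exp_add, hX_def]; ring_nf
    have hq : 148 * C + 9/4 * s ≤ 1/(3*β) * (Real.exp X - 1) := by
      have h5 : 3 * β * (s - 1) ^ 2 ≤ Real.exp X - 1 := le_trans h2 h3
      have h6 := mul_le_mul_of_nonneg_left h5 h3βpos.le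
      have hβne : (3*β) ≠ 0 := ne_of_gt (by linarith [hβ_pos])
      have h7 : 1/(3*β) * (3 * β * (s - 1) ^ 2) = (s - 1) ^ 2 := by
        rw [one_div, ← mul_assoc, inv_mul_cancel₀ hβne, one_mul]
      rw [h7] at h6
      linarith
    have := mul_le_mul_of_nonneg_right hq (Real.exp_nonneg (-(β * s ^ 3)))
    calc (148 * C + 9/4 * s) * Real.exp (-(β * s ^ 3))
        ≤ 1/(3*β) * (Real.exp X - 1) * Real.exp (-(β * s ^ 3)) := this
      _ = 1/(3*β) * Real.exp (-(β * (s - 1) ^ 3)) - 1/(3*β) * Real.exp (-(β * s ^ 3)) := by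
          rw [hE]; ring
  have hf_nonneg : ∀ j : ℕ, 0 ≤ (148 * C + 9/4 * (r + ((j:ℝ) + 1))) *
      Real.exp (-(β * (r + ((j:ℝ) + 1)) ^ 3)) := by
    intro j
    apply mul_nonneg _ (Real.exp_nonneg _)
    have hjn : (0:ℝ) ≤ (j:ℝ) := Nat.cast_nonneg j
    linarith
  have hpartial : ∀ n : ℕ, ∑ j ∈ Finset.range n, (148 * C + 9/4 * (r + ((j:ℝ) + 1))) *
      Real.exp (-(β * (r + ((j:ℝ) + 1)) ^ 3)) ≤ 1/(3*β) * Real.exp (-(β * r ^ 3)) := by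
    intro n
    have hb0 : b 0 = 1/(3*β) * Real.exp (-(β * r ^ 3)) := by
      simp only [hb_def]; norm_num
    calc ∑ j ∈ Finset.range n, (148 * C + 9/4 * (r + ((j:ℝ) + 1))) *
          Real.exp (-(β * (r + ((j:ℝ) + 1)) ^ 3))
        ≤ ∑ j ∈ Finset.range n, (b j - b (j+1)) :=
          Finset.sum_le_sum (fun j _ => hkey j)
      _ = b 0 - b n := Finset.sum_range_sub' b n
      _ ≤ b 0 := sub_le_self _ (hb_nonneg n)
      _ = 1/(3*β) * Real.exp (-(β * r ^ 3)) := hb0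
  exact le_trans (Real.tsum_le_of_sum_range_le hf_nonneg hpartial) hb0_le
end

section
/- Let m, k be positive integers with k ≥ 1 and 5k² ≤ m, set N = m − 1, let h > 0, and let a₁,...,a_N and b₁,...,b_N be nonnegative reals each summing to at most h. Call an index i ∈ {1,...,N} unsuitable if max(aᵢ,bᵢ) > 2h(k+1)/N. Then there exist k consecutive indices in {1,...,N} none of which is unsuitable. -/
/-!
An unsuitable index carries more than `2h(k+1)/N` of the total mass `∑ (aᵢ + bᵢ) ≤ 2h`, so there
are at most `N / (k+1)` of them. If every window of `k` consecutive indices contained one, the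
`N / k` disjoint windows would give at least `N / k` of them; but `N ≥ k(k+1)` makes
`N / (k+1) < N / k`.
-/

open Finset

theorem Nat.div_succ_lt_div_of_mul_succ_le {N k : ℕ} (hk : 0 < k) (hN : k * (k + 1) ≤ N) :
    N / (k + 1) < N / k := by
  have hq : k ≤ N / (k + 1) := (Nat.le_div_iff_mul_le (by omega)).2 hN
  have hqN : N / (k + 1) * (k + 1) ≤ N := Nat.div_mul_le_self N (k + 1)
  refine (Nat.le_div_iff_mul_le hk).2 ?_
  nlinarith

theorem div_le_card_of_meets_windows {U : Finset ℕ} {N k : ℕ}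
    (hU : ∀ j, j + k ≤ N → ∃ i ∈ U, j < i ∧ i ≤ j + k) : N / k ≤ #U := by
  -- `U` meets each of the `N / k` disjoint windows `(q k, q k + k]`.
  have hwindow : ∀ q ∈ range (N / k), ∃ i ∈ U, q * k < i ∧ i ≤ q * k + k := by
    intro q hq
    refine hU _ ?_
    calc q * k + k = (q + 1) * k := by ring
      _ ≤ N / k * k := Nat.mul_le_mul_right k (mem_range.1 hq)
      _ ≤ N := Nat.div_mul_le_self N k
  choose! f hfU hf using hwindow
  rw [← card_range (N / k)]
  refine card_le_card_of_injOn f hfU fun q₁ hq₁ q₂ hq₂ heq => ?_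
  obtain ⟨h₁, h₁'⟩ := hf q₁ hq₁
  obtain ⟨h₂, h₂'⟩ := hf q₂ hq₂
  rw [heq] at h₁ h₁'
  rcases Nat.lt_trichotomy q₁ q₂ with hlt | rfl | hgt
  · nlinarith
  · rfl
  · nlinarith

theorem card_filter_lt_max_mul_le {ι : Type*} {s : Finset ι} {a b : ι → ℝ} (T : ℝ)
    (ha : ∀ i ∈ s, 0 ≤ a i) (hb : ∀ i ∈ s, 0 ≤ b i) :
    #{i ∈ s | T < max (a i) (b i)} * T ≤ ∑ i ∈ s, a i + ∑ i ∈ s, b i := by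
  set U := {i ∈ s | T < max (a i) (b i)}
  have hUs : U ⊆ s := filter_subset _ _
  calc #U * T ≤ ∑ i ∈ U, (a i + b i) := by
        rw [← nsmul_eq_mul]
        refine card_nsmul_le_sum U _ T fun i hi => ?_
        obtain ⟨his, hTi⟩ := mem_filter.1 hi
        exact hTi.le.trans (max_le (le_add_of_nonneg_right (hb i his))
          (le_add_of_nonneg_left (ha i his)))
    _ = ∑ i ∈ U, a i + ∑ i ∈ U, b i := sum_add_distrib
    _ ≤ ∑ i ∈ s, a i + ∑ i ∈ s, b i := add_le_add
        (sum_le_sum_of_subset_of_nonneg hUs fun i hi _ => ha i hi)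
        (sum_le_sum_of_subset_of_nonneg hUs fun i hi _ => hb i hi)

theorem stmt9 (m k : ℕ) (hk : 1 ≤ k) (hm : 5 * k ^ 2 ≤ m) (h : ℝ) (hh : 0 < h)
    (a b : ℕ → ℝ)
    (ha : ∀ i ∈ Finset.Icc 1 (m - 1), 0 ≤ a i)
    (hb : ∀ i ∈ Finset.Icc 1 (m - 1), 0 ≤ b i)
    (hsa : ∑ i ∈ Finset.Icc 1 (m - 1), a i ≤ h)
    (hsb : ∑ i ∈ Finset.Icc 1 (m - 1), b i ≤ h) :
    ∃ j : ℕ, 1 ≤ j ∧ j + k - 1 ≤ m - 1 ∧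
      ∀ i : ℕ, j ≤ i → i ≤ j + k - 1 →
        max (a i) (b i) ≤ 2 * h * ((k:ℝ) + 1) / ((m:ℝ) - 1) := by
  set N := m - 1
  have hm1 : 1 ≤ m := by nlinarith
  have hNk : k * (k + 1) ≤ N := by
    have : k * (k + 1) + 1 ≤ 5 * k ^ 2 := by nlinarith
    omega
  have hN : (0 : ℝ) < N := by norm_cast; nlinarith
  rw [← Nat.cast_pred hm1]
  set U := {i ∈ Icc 1 N | 2 * h * (k + 1) / N < max (a i) (b i)}
  by_contra! hcon
  have hupper : #U * (k + 1) ≤ N := by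
    have hU : (#U : ℝ) * (2 * h * (k + 1) / N) ≤ 2 * h :=
      (card_filter_lt_max_mul_le _ ha hb).trans (by linarith)
    rw [mul_div_assoc', div_le_iff₀ hN, mul_left_comm, mul_le_mul_iff_right₀ (by positivity)] at hU
    exact_mod_cast hU
  have hlower : N / k ≤ #U := div_le_card_of_meets_windows fun j hj => by
    obtain ⟨i, hji, hij, hTi⟩ := hcon (j + 1) (by omega) (by omega)
    exact ⟨i, mem_filter.2 ⟨mem_Icc.2 ⟨by omega, by omega⟩, hTi⟩, by omega, by omega⟩
  have hcard : #U ≤ N / (k + 1) := (Nat.le_div_iff_mul_le (by omega)).2 hupper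
  exact (hlower.trans hcard).not_gt (Nat.div_succ_lt_div_of_mul_succ_le hk hNk)
end
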